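/- Define p(t, x₁, x') = 1_{t>0} (4πt)^{-n/2} (x₁/t) exp(-(x₁² + |x'|²)/(4t)) for t ∈ ℝ, x₁ > 0, x' ∈ ℝ^{n-1}. Then for every fixed x₁ > 0, ∫_ℝ ∫_{ℝ^{n-1}} p(t, x₁, x') dx' dt = 1. -/

import Mathlib

open MeasureTheory Set Real

private lemma aux_inner_int (n : ℕ) (hn : 1 ≤ n) (x₁ : ℝ) (t : ℝ) (ht : 0 < t) :
    (∫ x' : EuclideanSpace ℝ (Fin (n - 1)),
        (4 * π * t) ^ (-(n : ℝ) / 2) * (x₁ / t) *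
          Real.exp (-(x₁ ^ 2 + ‖x'‖ ^ 2) / (4 * t)))
    = (4 * π * t) ^ (-(n : ℝ) / 2) * (x₁ / t) * Real.exp (-x₁ ^ 2 / (4 * t)) *
        (4 * π * t) ^ (((n : ℝ) - 1) / 2) := by
  have hπ : 0 < π := Real.pi_pos
  have hb : 0 < 1 / (4 * t) := by positivity
  have key : ∀ x' : EuclideanSpace ℝ (Fin (n - 1)),
      (4 * π * t) ^ (-(n : ℝ) / 2) * (x₁ / t) *
          Real.exp (-(x₁ ^ 2 + ‖x'‖ ^ 2) / (4 * t))
      = ((4 * π * t) ^ (-(n : ℝ) / 2) * (x₁ / t) * Real.exp (-x₁ ^ 2 / (4 * t))) *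
          Real.exp (-(1 / (4 * t)) * ‖x'‖ ^ 2) := by
    intro x'
    have : -(x₁ ^ 2 + ‖x'‖ ^ 2) / (4 * t) = -x₁ ^ 2 / (4 * t) + -(1 / (4 * t)) * ‖x'‖ ^ 2 := by
      field_simp
      ring
    rw [this, Real.exp_add]
    ring
  simp_rw [key]
  rw [MeasureTheory.integral_const_mul, GaussianFourier.integral_rexp_neg_mul_sq_norm hb,
    finrank_euclideanSpace_fin,
    show π / (1 / (4 * t)) = 4 * π * t by field_simp,
    Nat.cast_sub hn, Nat.cast_one]

private lemma aux_pointwise (x₁ : ℝ) (hx₁ : 0 < x₁) (t : ℝ) (ht : 0 < t) :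
    (4 * π * t) ^ (-(1:ℝ)/2) * (x₁ / t) * Real.exp (-x₁ ^ 2 / (4 * t))
    = (x₁ ^ 2 / 4 / Real.sqrt π) *
        ((|(-1:ℝ)| * t ^ ((-1:ℝ) - 1)) •
          (Real.exp (-(x₁ ^ 2 / 4 * t ^ (-1:ℝ))) * (x₁ ^ 2 / 4 * t ^ (-1:ℝ)) ^ ((1:ℝ)/2 - 1))) := by
  have hπ : 0 < π := Real.pi_pos
  have h4 : Real.sqrt 4 = 2 := by
    rw [show (4:ℝ) = 2 ^ 2 by norm_num, Real.sqrt_sq (by norm_num)]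
  have c1 : (4 * π : ℝ) ^ (-(1:ℝ)/2) = (2 * Real.sqrt π)⁻¹ := by
    rw [show (-(1:ℝ)/2) = -(1/2) by norm_num, Real.rpow_neg (by positivity),
      ← Real.sqrt_eq_rpow, Real.sqrt_mul (by norm_num), h4]
  have c2 : (x₁ ^ 2 / 4 : ℝ) ^ ((1:ℝ)/2 - 1) = 2 / x₁ := by
    rw [show ((1:ℝ)/2 - 1) = -(1/2) by norm_num, Real.rpow_neg (by positivity),
      ← Real.sqrt_eq_rpow, Real.sqrt_div (by positivity), Real.sqrt_sq hx₁.le, h4, inv_div]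
  have harg : -x₁ ^ 2 / (4 * t) = -(x₁ ^ 2 / 4 * t ^ (-1:ℝ)) := by
    rw [Real.rpow_neg_one]; field_simp
  have hmt : (x₁ ^ 2 / 4 * t ^ (-1:ℝ)) ^ ((1:ℝ)/2 - 1)
      = (2 / x₁) * t ^ ((1:ℝ)/2) := by
    rw [Real.mul_rpow (by positivity) (by positivity), c2, ← Real.rpow_mul ht.le]
    norm_num
  have hsplit : (4 * π * t) ^ (-(1:ℝ)/2) = (2 * Real.sqrt π)⁻¹ * t ^ (-(1:ℝ)/2) := by
    rw [Real.mul_rpow (by positivity) ht.le, c1]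
  have hts : t ^ ((-1:ℝ) - 1) * t ^ ((1:ℝ)/2) * t = t ^ (-(1:ℝ)/2) := by
    rw [← Real.rpow_add ht, ← Real.rpow_add_one ht.ne']
    norm_num
  rw [hsplit, harg, hmt, abs_neg, abs_one, smul_eq_mul]
  have hsπ : Real.sqrt π ≠ 0 := by positivity
  field_simp
  rw [neg_div] at hts
  rw [← hts]
  ring

/-- The lateral Poisson kernel for the half-space heat problem has total integral `1`:
for each `x₁ > 0`, `∫_ℝ ∫_{ℝ^{n-1}} 1_{t>0} (4πt)^{-n/2} (x₁/t) e^{-(x₁²+|x'|²)/(4t)} dx' dt = 1`. -/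
theorem stmt_6 (n : ℕ) (hn : 1 ≤ n) (x₁ : ℝ) (hx₁ : 0 < x₁) :
    (∫ t in Ioi (0 : ℝ), ∫ x' : EuclideanSpace ℝ (Fin (n - 1)),
        (4 * π * t) ^ (-(n : ℝ) / 2) * (x₁ / t) *
          Real.exp (-(x₁ ^ 2 + ‖x'‖ ^ 2) / (4 * t))) = 1 := by
  have hπ : 0 < π := Real.pi_pos
  have hbpos : 0 < x₁ ^ 2 / 4 := by positivity
  have hIg : ∫ u in Ioi (0:ℝ), Real.exp (-u) * u ^ ((1:ℝ)/2 - 1) = Real.sqrt π := by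
    rw [show ((1:ℝ)/2 - 1) = 1/2 - 1 by norm_num, ← Real.Gamma_eq_integral one_half_pos,
      Real.Gamma_one_half_eq]
  have hIgb : ∫ s in Ioi (0:ℝ), Real.exp (-(x₁ ^ 2 / 4 * s)) *
      (x₁ ^ 2 / 4 * s) ^ ((1:ℝ)/2 - 1) = (x₁ ^ 2 / 4)⁻¹ * Real.sqrt π := by
    have h := MeasureTheory.integral_comp_mul_left_Ioi
      (fun u => Real.exp (-u) * u ^ ((1:ℝ)/2 - 1)) 0 hbpos
    rw [mul_zero] at h
    rw [h, hIg, smul_eq_mul]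
  have hsub : (∫ t in Ioi (0:ℝ), (|(-1:ℝ)| * t ^ ((-1:ℝ) - 1)) •
      (Real.exp (-(x₁ ^ 2 / 4 * t ^ (-1:ℝ))) * (x₁ ^ 2 / 4 * t ^ (-1:ℝ)) ^ ((1:ℝ)/2 - 1)))
      = (x₁ ^ 2 / 4)⁻¹ * Real.sqrt π := by
    rw [MeasureTheory.integral_comp_rpow_Ioi
      (fun s => Real.exp (-(x₁ ^ 2 / 4 * s)) * (x₁ ^ 2 / 4 * s) ^ ((1:ℝ)/2 - 1))
      (p := -1) (by norm_num)]
    exact hIgb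
  have hcongr : (∫ t in Ioi (0 : ℝ), ∫ x' : EuclideanSpace ℝ (Fin (n - 1)),
      (4 * π * t) ^ (-(n : ℝ) / 2) * (x₁ / t) *
        Real.exp (-(x₁ ^ 2 + ‖x'‖ ^ 2) / (4 * t)))
      = ∫ t in Ioi (0:ℝ), (x₁ ^ 2 / 4 / Real.sqrt π) * ((|(-1:ℝ)| * t ^ ((-1:ℝ) - 1)) •
          (Real.exp (-(x₁ ^ 2 / 4 * t ^ (-1:ℝ))) *
            (x₁ ^ 2 / 4 * t ^ (-1:ℝ)) ^ ((1:ℝ)/2 - 1))) := by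
    refine setIntegral_congr_fun measurableSet_Ioi (fun t ht => ?_)
    have ht : (0:ℝ) < t := ht
    rw [aux_inner_int n hn x₁ t ht, ← aux_pointwise x₁ hx₁ t ht]
    have hcomb : (4 * π * t) ^ (-(n : ℝ) / 2) * (4 * π * t) ^ (((n : ℝ) - 1) / 2)
        = (4 * π * t) ^ (-(1:ℝ)/2) := by
      rw [← Real.rpow_add (by positivity)]
      congr 1
      ring
    calc (4 * π * t) ^ (-(n : ℝ) / 2) * (x₁ / t) * Real.exp (-x₁ ^ 2 / (4 * t)) *
          (4 * π * t) ^ (((n : ℝ) - 1) / 2)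
        = ((4 * π * t) ^ (-(n : ℝ) / 2) * (4 * π * t) ^ (((n : ℝ) - 1) / 2)) *
            (x₁ / t) * Real.exp (-x₁ ^ 2 / (4 * t)) := by ring
      _ = (4 * π * t) ^ (-(1:ℝ)/2) * (x₁ / t) * Real.exp (-x₁ ^ 2 / (4 * t)) := by
          rw [hcomb]
  rw [hcongr, MeasureTheory.integral_const_mul, hsub]
  have hsπ : Real.sqrt π ≠ 0 := by positivity
  field_simp
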